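/- arXiv:2403.02008 — 7 statements merged into one kernel-verified Lean document; each statement's English description precedes it below -/
import Mathlib

section
/- Backward extension step of the forward-backward algorithm: if P[i..j] is a MEM with j < m, then the next MEM from the left (the MEM containing position j+1 with the smallest starting position greater than i) starts at position i' = (j+1) - b + 1, where b is the maximum length of a suffix of P[1..j+1] that occurs as a substring of T. -/
open List

variable {α : Type*}

/-- `pseg P i j` is the substring `P[i..j]` (1-based, inclusive). -/
def pseg (P : List α) (i j : ℕ) : List α := (P.take j).drop (i - 1)

/-- `P[i..j]` is a MEM (maximal exact match) of `P` with respect to `T`. -/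
def IsMEM (P T : List α) (i j : ℕ) : Prop :=
  1 ≤ i ∧ i ≤ j ∧ j ≤ P.length ∧
  pseg P i j <:+: T ∧
  (i = 1 ∨ ¬ pseg P (i - 1) j <:+: T) ∧
  (j = P.length ∨ ¬ pseg P i (j + 1) <:+: T)

/-- The maximum length of a prefix of `Q` occurring as a substring of `T`. -/
noncomputable def lcpLen (Q T : List α) : ℕ :=
  sSup {l | l ≤ Q.length ∧ Q.take l <:+: T}

/-- The maximum length of a suffix of `Q` occurring as a substring of `T`. -/
noncomputable def lcsLen (Q T : List α) : ℕ :=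
  sSup {l | l ≤ Q.length ∧ Q.drop (Q.length - l) <:+: T}

/-- The length of the longest common suffix of `Q` and `R`. -/
noncomputable def lcsufLen (Q R : List α) : ℕ :=
  sSup {l | l ≤ Q.length ∧ l ≤ R.length ∧ Q.drop (Q.length - l) = R.drop (R.length - l)}

lemma drop_suffix_drop (l : List α) {a a' : ℕ} (h : a ≤ a') : l.drop a' <:+ l.drop a := by
  rw [show a' = a + (a' - a) by omega, ← List.drop_drop]
  exact drop_suffix _ _

lemma pseg_prefix_of_le (P : List α) (i : ℕ) {c c' : ℕ} (h : c ≤ c') :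
    pseg P i c <+: pseg P i c' := by
  unfold pseg
  rw [show P.take c = (P.take c').take c by rw [take_take, min_eq_left h], drop_take]
  exact take_prefix _ _

lemma pseg_suffix_of_le (P : List α) {i i' : ℕ} (c : ℕ) (h : i ≤ i') :
    pseg P i' c <:+ pseg P i c := by
  unfold pseg
  exact drop_suffix_drop _ (by omega)

lemma pseg_infix_of_le (P : List α) {i i' c c' : ℕ} (hi : i ≤ i') (hc : c' ≤ c) :
    pseg P i' c' <:+: pseg P i c :=
  (pseg_prefix_of_le P i' hc).isInfix.trans (pseg_suffix_of_le P c hi).isInfix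

/-- backward extension step: if `P[i..j]` is a MEM with `j < m`, the next MEM
from the left starts at `i' = (j + 1) - b + 1` where `b = LCS(P[1..j+1], T)`. -/
theorem backward_extension (P T : List α) (i j : ℕ)
    (hocc : ∀ c ∈ P, [c] <:+: T)
    (h : IsMEM P T i j) (hjm : j < P.length) :
    (∃ j', IsMEM P T ((j + 1) - lcsLen (P.take (j + 1)) T + 1) j' ∧ j + 1 ≤ j') ∧
    (∀ i'' j'', IsMEM P T i'' j'' → i < i'' →
      (j + 1) - lcsLen (P.take (j + 1)) T + 1 ≤ i'') := by
  obtain ⟨hi1, hij, hjle, hinf, hleft, hright⟩ := h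
  set Q := P.take (j + 1) with hQ
  have hQlen : Q.length = j + 1 := by rw [hQ, length_take]; omega
  have hpseg : ∀ a, pseg P a (j + 1) = Q.drop (a - 1) := fun a => by rw [hQ]; rfl
  have hSbdd : BddAbove {l | l ≤ Q.length ∧ Q.drop (Q.length - l) <:+: T} :=
    ⟨Q.length, fun l hl => hl.1⟩
  have hb_mem : lcsLen Q T ≤ Q.length ∧ Q.drop (Q.length - lcsLen Q T) <:+: T := by
    have : sSup {l | l ≤ Q.length ∧ Q.drop (Q.length - l) <:+: T} ∈
        {l | l ≤ Q.length ∧ Q.drop (Q.length - l) <:+: T} :=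
      Nat.sSup_mem ⟨0, Nat.zero_le _, by simp⟩ hSbdd
    exact this
  have hb_le : ∀ l, l ≤ Q.length → Q.drop (Q.length - l) <:+: T → l ≤ lcsLen Q T :=
    fun l h1 h2 => le_csSup hSbdd ⟨h1, h2⟩
  set b := lcsLen Q T with hbdef
  -- b ≥ 1
  have hjQ : j < Q.length := by omega
  have hb1 : 1 ≤ b := by
    apply hb_le 1 (by omega)
    have hdrop : Q.drop (Q.length - 1) = [Q[j]] := by
      rw [show Q.length - 1 = j by omega, drop_eq_getElem_cons hjQ,
        show j + 1 = Q.length by omega, drop_length]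
    rw [hdrop]
    have hsub : Q ⊆ P := by rw [hQ]; exact (take_prefix _ _).subset
    exact hocc _ (hsub (getElem_mem hjQ))
  have hnotinf : ¬ pseg P i (j + 1) <:+: T := hright.resolve_left (by omega)
  -- b ≤ j + 1 - i
  have hble : b ≤ j + 1 - i := by
    by_contra hc
    push_neg at hc
    apply hnotinf
    rw [hpseg i]
    exact (drop_suffix_drop Q (show Q.length - b ≤ i - 1 by omega)).isInfix.trans hb_mem.2
  have hbj : b ≤ j := by omega
  -- the right endpoint set for i' = j + 1 - b + 1
  have hS'bdd : BddAbove {e | e ≤ P.length ∧ pseg P (j + 1 - b + 1) e <:+: T} :=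
    ⟨P.length, fun e he => he.1⟩
  have hj1S : (j + 1) ∈ {e | e ≤ P.length ∧ pseg P (j + 1 - b + 1) e <:+: T} := by
    refine ⟨by omega, ?_⟩
    rw [hpseg, show (j + 1 - b + 1) - 1 = Q.length - b by omega]
    exact hb_mem.2
  set j' := sSup {e | e ≤ P.length ∧ pseg P (j + 1 - b + 1) e <:+: T} with hj'def
  have hj'mem : j' ≤ P.length ∧ pseg P (j + 1 - b + 1) j' <:+: T :=
    Nat.sSup_mem ⟨j + 1, hj1S⟩ hS'bdd
  have hj'ge : j + 1 ≤ j' := le_csSup hS'bdd hj1S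
  constructor
  · refine ⟨j', ⟨by omega, by omega, hj'mem.1, hj'mem.2, ?_, ?_⟩, hj'ge⟩
    · right
      intro hcon
      have hinf2 : pseg P (j + 1 - b + 1 - 1) (j + 1) <:+: T :=
        (pseg_prefix_of_le P _ hj'ge).isInfix.trans hcon
      have hmem2 : b + 1 ≤ b := by
        apply hb_le (b + 1) (by omega)
        rw [show Q.length - (b + 1) = (j + 1 - b + 1 - 1) - 1 by omega, ← hpseg]
        exact hinf2
      omega
    · rcases eq_or_lt_of_le hj'mem.1 with heq | hlt
      · exact Or.inl heq
      · right
        intro hcon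
        have : j' + 1 ≤ j' := le_csSup hS'bdd ⟨by omega, hcon⟩
        omega
  · intro i'' j'' hmem hlt
    obtain ⟨h1'', h2'', h3'', h4'', h5'', h6''⟩ := hmem
    have hj'' : j + 1 ≤ j'' := by
      by_contra hc
      push_neg at hc
      have hne1 : i'' ≠ 1 := by omega
      exact (h5''.resolve_left hne1)
        ((pseg_infix_of_le P (show i ≤ i'' - 1 by omega) (show j'' ≤ j by omega)).trans hinf)
    by_cases hcase : j + 2 ≤ i''
    · omega
    · have hlmem : j + 2 - i'' ≤ b := by
        apply hb_le _ (by omega)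
        rw [show Q.length - (j + 2 - i'') = i'' - 1 by omega, ← hpseg]
        exact (pseg_prefix_of_le P i'' hj'').isInfix.trans h4''
      omega
end

section
/- If P[i..j] is a MEM with j < m, then the character P[j+1] is contained in the next MEM from the left, i.e., there is a MEM P[i'..j'] with i < i' ≤ j+1 ≤ j'. -/
open List

variable {α : Type*}

/-! The next MEM is found in two steps: move the left end `i'` to the first position after `i`
from which `P[i'..j+1]` still occurs in `T` (the character `P[j+1]` alone occurs, and
`P[i..j+1]` does not since `P[i..j]` is right-maximal), then extend to the right as far as
possible. Minimality of `i'` makes `P[i'..j+1]` left-maximal, and extending to the right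
cannot spoil left-maximality. -/

theorem pseg_infix_pseg (P : List α) {a a' b b' : ℕ} (ha : a ≤ a') (hb : b' ≤ b) :
    pseg P a' b' <:+: pseg P a b := by
  have hpre : pseg P a' b' <+: (P.take b).drop (a' - 1) := by
    rw [pseg, ← min_eq_left hb, ← List.take_take, List.drop_take]
    exact List.take_prefix _ _
  have hsuf : (P.take b).drop (a' - 1) <:+ pseg P a b := by
    rw [pseg, ← Nat.sub_add_cancel (Nat.sub_le_sub_right ha 1), add_comm, ← List.drop_drop]
    exact List.drop_suffix _ _
  exact hpre.isInfix.trans hsuf.isInfix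

theorem pseg_succ_succ (P : List α) {j : ℕ} (hj : j < P.length) :
    pseg P (j + 1) (j + 1) = [P[j]] := by
  rw [pseg, Nat.add_sub_cancel, List.drop_take, Nat.add_sub_cancel_left,
    List.take_one_drop_eq_of_lt_length hj, List.get_eq_getElem]

theorem exists_isMEM_of_left_maximal {P T : List α} {a b : ℕ} (ha : 1 ≤ a) (hab : a ≤ b)
    (hb : b ≤ P.length) (hocc : pseg P a b <:+: T)
    (hleft : a = 1 ∨ ¬ pseg P (a - 1) b <:+: T) :
    ∃ b', b ≤ b' ∧ IsMEM P T a b' := by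
  classical
  set b' := Nat.findGreatest (fun c => pseg P a c <:+: T) P.length
  have hbb' : b ≤ b' := Nat.le_findGreatest hb hocc
  have hb'P : b' ≤ P.length := Nat.findGreatest_le _
  refine ⟨b', hbb', ha, hab.trans hbb', hb'P, Nat.findGreatest_spec (P := fun c ↦ pseg P a c <:+: T) hb hocc, ?_, ?_⟩
  · exact hleft.imp_right fun h h' ↦ h ((pseg_infix_pseg P le_rfl hbb').trans h')
  · rcases hb'P.eq_or_lt with h | h
    · exact .inl h
    · exact .inr (Nat.findGreatest_is_greatest (Nat.lt_succ_self b') h)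

/-- if `P[i..j]` is a MEM with `j < m`, then `P[j+1]` is contained in the
next MEM from the left. -/
theorem next_char_in_next_mem (P T : List α) (i j : ℕ)
    (hocc : ∀ c ∈ P, [c] <:+: T)
    (h : IsMEM P T i j) (hjm : j < P.length) :
    ∃ i' j', IsMEM P T i' j' ∧ i < i' ∧ i' ≤ j + 1 ∧ j + 1 ≤ j' := by
  classical
  obtain ⟨-, hij, -, -, -, hright⟩ := h
  have hright' : ¬ pseg P i (j + 1) <:+: T := hright.resolve_left (by omega)
  have hlast : pseg P (j + 1) (j + 1) <:+: T :=
    pseg_succ_succ P hjm ▸ hocc _ (List.getElem_mem hjm)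
  have hex : ∃ a, i < a ∧ pseg P a (j + 1) <:+: T := ⟨j + 1, by omega, hlast⟩
  obtain ⟨hi', hocc'⟩ := Nat.find_spec hex
  have hi'j : Nat.find hex ≤ j + 1 := Nat.find_le ⟨by omega, hlast⟩
  have hleft : Nat.find hex = 1 ∨ ¬ pseg P (Nat.find hex - 1) (j + 1) <:+: T := by
    refine .inr fun hcon ↦ ?_
    rcases (by omega : Nat.find hex - 1 = i ∨ i < Nat.find hex - 1) with heq | hlt
    · exact hright' (heq ▸ hcon)
    · exact Nat.find_min hex (by omega) ⟨hlt, hcon⟩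
  obtain ⟨j', hj', hmem⟩ :=
    exists_isMEM_of_left_maximal (by omega) hi'j (by omega) hocc' hleft
  exact ⟨_, j', hmem, hi', hi'j, hj'⟩
end

section
/- Goga et al.'s lazy-evaluation observation: suppose a MEM starts at P[i], and let j ≥ i + L − 1 be an index such that j = m or MB[j+1] ≠ MB[j] + 1, and suppose MB[k+1] = MB[k] + 1 for all k with i + L − 1 ≤ k < j. Then every MEM of length at least L starting at a position in [i, j] includes position j (i.e., its interval contains j). -/
/-!
If a MEM `P[i'..j']` with `i ≤ i'` and length at least `L` ended before `j`, then `j'` would lie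
in the run, so `MB[j'+1] = MB[j'] + 1`. As `P[i'..j']` occurs in `T`, the maximality of `MB[j']`
makes it a suffix of `T[1..MB[j']]`; as `P[j'+1]` occurs in `T`, the maximality of `MB[j'+1]`
forces `P[j'+1] = T[MB[j'] + 1]`. Hence `P[i'..j'+1]` occurs in `T`, against right-maximality.
-/

open List

variable {α : Type*}

/-- `T[1..m]` has a longest common suffix with `Q` among all prefixes of `T`
(the defining property of `MB[k]` for `Q = P[1..k]`). -/
def IsBestMatchEnd (Q T : List α) (m : ℕ) : Prop :=
  m ≤ T.length ∧ ∀ t ≤ T.length, lcsufLen Q (T.take t) ≤ lcsufLen Q (T.take m)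

lemma lcsufLen_spec (Q R : List α) :
    lcsufLen Q R ≤ Q.length ∧ lcsufLen Q R ≤ R.length ∧
      Q.drop (Q.length - lcsufLen Q R) = R.drop (R.length - lcsufLen Q R) :=
  Nat.sSup_mem (s := {l | l ≤ Q.length ∧ l ≤ R.length ∧
      Q.drop (Q.length - l) = R.drop (R.length - l)})
    ⟨0, by simp⟩ ⟨Q.length, fun _ hx => hx.1⟩

lemma length_le_lcsufLen {u Q R : List α} (hQ : u <:+ Q) (hR : u <:+ R) :
    u.length ≤ lcsufLen Q R :=
  le_csSup ⟨Q.length, fun _ hx => hx.1⟩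
    ⟨hQ.length_le, hR.length_le, (suffix_iff_eq_drop.mp hQ).symm.trans (suffix_iff_eq_drop.mp hR)⟩

lemma List.IsSuffix.suffix_of_length_le_lcsufLen {u Q R : List α} (hQ : u <:+ Q)
    (h : u.length ≤ lcsufLen Q R) : u <:+ R := by
  obtain ⟨hlQ, -, hcommon⟩ := lcsufLen_spec Q R
  have hu : u <:+ Q.drop (Q.length - lcsufLen Q R) :=
    suffix_of_suffix_length_le hQ (drop_suffix _ _) (by simp; omega)
  exact hu.trans (hcommon ▸ drop_suffix _ _)

lemma IsBestMatchEnd.suffix_take {Q T u : List α} {m : ℕ} (hm : IsBestMatchEnd Q T m)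
    (hQ : u <:+ Q) (hT : u <:+: T) : u <:+ T.take m := by
  obtain ⟨s, t, rfl⟩ := hT
  have hu : u <:+ (s ++ u ++ t).take (s ++ u).length := by
    rw [take_left]
    exact suffix_append s u
  exact hQ.suffix_of_length_le_lcsufLen
    ((length_le_lcsufLen hQ hu).trans (hm.2 _ (by simp)))

lemma pseg_suffix_take (P : List α) (i j : ℕ) : pseg P i j <:+ P.take j :=
  drop_suffix _ _

lemma pseg_succ {P : List α} {i j : ℕ} (hi : i ≤ j + 1) (hj : j < P.length) :
    pseg P i (j + 1) = pseg P i j ++ [P[j]] := by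
  rw [pseg, pseg, take_succ_eq_append_getElem hj, drop_append_of_le_length (by simp; omega)]

theorem IsMEM.bestMatchEnd_succ_ne {P T : List α} {i j m m' : ℕ} (hmem : IsMEM P T i j)
    (hj : j < P.length) (hocc : [P[j]] <:+: T) (hm : IsBestMatchEnd (P.take j) T m)
    (hm' : IsBestMatchEnd (P.take (j + 1)) T m') : m' ≠ m + 1 := by
  rintro rfl
  obtain ⟨-, hij, -, hseg, -, hright⟩ := hmem
  have hmT : m < T.length := hm'.1
  have hmatch : pseg P i j <:+ T.take m := hm.suffix_take (pseg_suffix_take P i j) hseg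
  have hlast : [P[j]] <:+ T.take m ++ [T[m]] := by
    rw [← take_succ_eq_append_getElem hmT]
    exact hm'.suffix_take (take_succ_eq_append_getElem hj ▸ suffix_append _ _) hocc
  have hext : pseg P i (j + 1) <:+ T.take (m + 1) := by
    rw [pseg_succ (by omega) hj, take_succ_eq_append_getElem hmT,
      singleton_suffix_append_singleton_iff.mp hlast]
    exact suffix_append_self_iff.mpr hmatch
  exact hright.resolve_left (by omega) (hext.isInfix.trans (take_prefix _ _).isInfix)

theorem lazy_evaluation_general (P T : List α) (MB : ℕ → ℕ) (L i j : ℕ)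
    (hocc : ∀ c ∈ P, [c] <:+: T)
    (hMB : ∀ k, 1 ≤ k → k ≤ P.length →
      MB k ≤ T.length ∧
      ∀ t ≤ T.length, lcsufLen (P.take k) (T.take t) ≤ lcsufLen (P.take k) (T.take (MB k)))
    (hjm : j ≤ P.length)
    (hrun : ∀ k, i + L - 1 ≤ k → k < j → MB (k + 1) = MB k + 1) :
    ∀ i' j', IsMEM P T i' j' → L ≤ j' - i' + 1 → i ≤ i' → i' ≤ j →
      i' ≤ j ∧ j ≤ j' := by
  intro i' j' hmem hlen hii' hi'j
  refine ⟨hi'j, ?_⟩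
  by_contra! hj'j
  have hj'P : j' < P.length := by omega
  have hi' : 1 ≤ i' := hmem.1
  have hi'j' : i' ≤ j' := hmem.2.1
  exact hmem.bestMatchEnd_succ_ne hj'P (hocc _ (getElem_mem hj'P))
    (hMB j' (by omega) hj'P.le) (hMB (j' + 1) (by omega) hj'P) (hrun j' (by omega) hj'j)

/-- Goga et al.'s lazy-evaluation observation. -/
theorem lazy_evaluation (P T : List α) (MB : ℕ → ℕ) (L i j : ℕ)
    (hL : 1 ≤ L)
    (hocc : ∀ c ∈ P, [c] <:+: T)
    (hMB : ∀ k, 1 ≤ k → k ≤ P.length →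
      MB k ≤ T.length ∧
      ∀ t ≤ T.length, lcsufLen (P.take k) (T.take t) ≤ lcsufLen (P.take k) (T.take (MB k)))
    (hstart : ∃ j0, IsMEM P T i j0)
    (hj : i + L - 1 ≤ j) (hjm : j ≤ P.length)
    (hstop : j = P.length ∨ MB (j + 1) ≠ MB j + 1)
    (hrun : ∀ k, i + L - 1 ≤ k → k < j → MB (k + 1) = MB k + 1) :
    ∀ i' j', IsMEM P T i' j' → L ≤ j' - i' + 1 → i ≤ i' → i' ≤ j →
      i' ≤ j ∧ j ≤ j' :=
  lazy_evaluation_general P T MB L i j hocc hMB hjm hrun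
end

section
/- Case 1 correctness of Algorithm 1: suppose P[i] starts a MEM, i ≤ m - L + 1, and b = LCS(P[1..i+L-1], T) ≥ L, where LCS(Q, T) denotes the maximum length of a suffix of Q occurring as a substring of T. Then the MEM starting at P[i] has length f = LCP(P[i..m], T) ≥ L, i.e., P[i..i+f-1] is a MEM of length at least L. -/
/-! Since `b ≥ L`, the length-`L` suffix of `P[1..i+L-1]`, which is the window `P[i..i+L-1]`,
occurs in `T`; hence `LCP(P[i..m], T) ≥ L`. Right-maximality of the MEM `P[i..j]` starting at `i`
makes its length `j - i + 1` exactly `LCP(P[i..m], T)`. -/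

open List

variable {α : Type*}

variable {P Q T : List α}

lemma le_lcpLen {l : ℕ} (hl : l ≤ Q.length) (h : Q.take l <:+: T) : l ≤ lcpLen Q T :=
  le_csSup ⟨Q.length, fun _ hl' => hl'.1⟩ ⟨hl, h⟩

lemma lcpLen_eq_of_maximal {k : ℕ} (hk : k ≤ Q.length) (hocc : Q.take k <:+: T)
    (hmax : k = Q.length ∨ ¬ Q.take (k + 1) <:+: T) : lcpLen Q T = k := by
  refine le_antisymm (csSup_le ⟨k, hk, hocc⟩ fun l ⟨hlQ, hl⟩ => ?_) (le_lcpLen hk hocc)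
  by_contra! hkl
  rcases hmax with hkQ | hnot
  · omega
  · exact hnot ((take_prefix_take_left hkl).isInfix.trans hl)

lemma drop_infix_of_le_lcsLen {l : ℕ} (h : l ≤ lcsLen Q T) : Q.drop (Q.length - l) <:+: T := by
  obtain ⟨-, hmax⟩ : lcsLen Q T ∈ {l | l ≤ Q.length ∧ Q.drop (Q.length - l) <:+: T} :=
    Nat.sSup_mem ⟨0, by simp⟩ ⟨Q.length, fun _ hl => hl.1⟩
  exact (drop_suffix_drop_left Q (by omega)).isInfix.trans hmax

lemma take_drop_infix_of_le_lcsLen {i L : ℕ} (hiL : i + L ≤ P.length)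
    (h : L ≤ lcsLen (P.take (i + L)) T) : (P.drop i).take L <:+: T := by
  have hocc := drop_infix_of_le_lcsLen h
  rwa [length_take_of_le hiL, Nat.add_sub_cancel, drop_take, Nat.add_sub_cancel_left] at hocc

lemma pseg_eq_take_drop (P : List α) (i j : ℕ) :
    pseg P i j = (P.drop (i - 1)).take (j - (i - 1)) := by
  simp [pseg, drop_take]

lemma IsMEM.lcpLen_eq {i j : ℕ} (hM : IsMEM P T i j) : lcpLen (P.drop (i - 1)) T = j - (i - 1) := by
  obtain ⟨-, hij, hjP, hocc, -, hright⟩ := hM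
  rw [pseg_eq_take_drop] at hocc hright
  refine lcpLen_eq_of_maximal (by rw [length_drop]; omega) hocc ?_
  rw [show j + 1 - (i - 1) = j - (i - 1) + 1 by omega] at hright
  exact hright.imp_left fun hjP => by rw [length_drop]; omega

theorem case1_correct_general (P T : List α) (L i : ℕ)
    (hstart : ∃ j, IsMEM P T i j)
    (hiL : i + L ≤ P.length + 1)
    (hb : L ≤ lcsLen (P.take (i + L - 1)) T) :
    L ≤ lcpLen (P.drop (i - 1)) T ∧
    IsMEM P T i (i + lcpLen (P.drop (i - 1)) T - 1) := by
  obtain ⟨j, hM⟩ := hstart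
  have hi : 1 ≤ i := hM.1
  have hwindow : (P.drop (i - 1)).take L <:+: T :=
    take_drop_infix_of_le_lcsLen (by omega) (by rwa [← Nat.sub_add_comm hi])
  refine ⟨le_lcpLen (by rw [length_drop]; omega) hwindow, ?_⟩
  rwa [hM.lcpLen_eq, show i + (j - (i - 1)) - 1 = j by have := hM.2.1; omega]

/-- Case 1 correctness of Algorithm 1. -/
theorem case1_correct (P T : List α) (L i : ℕ)
    (hL : 1 ≤ L) (hi1 : 1 ≤ i)
    (hocc : ∀ c ∈ P, [c] <:+: T)
    (hstart : ∃ j, IsMEM P T i j)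
    (hiL : i + L ≤ P.length + 1)
    (hb : L ≤ lcsLen (P.take (i + L - 1)) T) :
    L ≤ lcpLen (P.drop (i - 1)) T ∧
    IsMEM P T i (i + lcpLen (P.drop (i - 1)) T - 1) :=
  case1_correct_general P T L i hstart hiL hb
end

section
/- Case 2 correctness of Algorithm 1: suppose P[i] starts a MEM, i ≤ m - L + 1, and b = LCS(P[1..i+L-1], T) < L. Then (a) no MEM of length at least L starts at any position in [i, i + L - b - 1], and (b) a MEM starts at position i + L - b. -/
open List

variable {α : Type*}

lemma pseg_prefix (P : List α) (a j₁ j₂ : ℕ) (h : j₁ ≤ j₂) :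
    pseg P a j₁ <+: pseg P a j₂ := by
  unfold pseg
  have h1 : P.take j₁ = (P.take j₂).take j₁ := by rw [List.take_take, min_eq_left h]
  rw [h1, List.drop_take]
  exact List.take_prefix _ _

/-- Case 2 correctness of Algorithm 1. -/
theorem case2_correct (P T : List α) (L i : ℕ)
    (hL : 1 ≤ L) (hi1 : 1 ≤ i)
    (hocc : ∀ c ∈ P, [c] <:+: T)
    (hstart : ∃ j, IsMEM P T i j)
    (hiL : i + L ≤ P.length + 1)
    (hb : lcsLen (P.take (i + L - 1)) T < L) :
    (∀ i'' j'', IsMEM P T i'' j'' → i ≤ i'' →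
      i'' ≤ i + L - lcsLen (P.take (i + L - 1)) T - 1 → j'' - i'' + 1 < L) ∧
    (∃ j', IsMEM P T (i + L - lcsLen (P.take (i + L - 1)) T) j') := by
  have hQlen : (P.take (i + L - 1)).length = i + L - 1 := by
    rw [List.length_take]; omega
  set Q := P.take (i + L - 1) with hQ
  set S := {l | l ≤ Q.length ∧ Q.drop (Q.length - l) <:+: T} with hS
  have hbdd : BddAbove S := ⟨Q.length, fun l hl => hl.1⟩
  have h1S : 1 ∈ S := by
    refine ⟨by omega, ?_⟩
    have hlen1 : (Q.drop (Q.length - 1)).length = 1 := by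
      rw [List.length_drop]; omega
    obtain ⟨c, hc⟩ := List.length_eq_one_iff.mp hlen1
    rw [hc]
    apply hocc
    have hcQ : c ∈ Q := List.drop_subset _ _ (by rw [hc]; simp)
    exact List.take_subset _ _ (hQ ▸ hcQ)
  have hbeq : lcsLen Q T = sSup S := rfl
  set b := lcsLen Q T with hbdef
  have hbS : b ∈ S := hbeq ▸ Nat.sSup_mem ⟨1, h1S⟩ hbdd
  have hble : ∀ l ∈ S, l ≤ b := fun l hl => hbeq ▸ le_csSup hbdd hl
  have hb1 : 1 ≤ b := hble 1 h1S
  have hbQlen : b ≤ i + L - 1 := hQlen ▸ hbS.1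
  have hbQ : Q.drop (Q.length - b) <:+: T := hbS.2
  constructor
  · intro i'' j'' hmem hge hle
    by_contra hcon
    push_neg at hcon
    obtain ⟨h1, h2, h3, hinf, -, -⟩ := hmem
    have hj'' : i + L - 1 ≤ j'' := by omega
    have hinf' : pseg P i'' (i + L - 1) <:+: T :=
      (pseg_prefix P i'' (i + L - 1) j'' hj'').isInfix.trans hinf
    have hmemS : (i + L - i'') ∈ S := by
      refine ⟨by omega, ?_⟩
      have he : Q.length - (i + L - i'') = i'' - 1 := by omega
      rw [he, hQ]
      exact hinf'
    have := hble _ hmemS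
    omega
  · set J := {j | j ≤ P.length ∧ pseg P (i + L - b) j <:+: T} with hJ
    have hJbdd : BddAbove J := ⟨P.length, fun j hj => hj.1⟩
    have hiL1J : (i + L - 1) ∈ J := by
      refine ⟨by omega, ?_⟩
      show (P.take (i + L - 1)).drop (i + L - b - 1) <:+: T
      have he : i + L - b - 1 = Q.length - b := by omega
      rw [← hQ, he]
      exact hbQ
    set j' := sSup J with hj'def
    have hj'J : j' ∈ J := Nat.sSup_mem ⟨_, hiL1J⟩ hJbdd
    have hle' : i + L - 1 ≤ j' := le_csSup hJbdd hiL1J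
    refine ⟨j', by omega, by omega, hj'J.1, hj'J.2, ?_, ?_⟩
    · right
      intro hcontra
      have hinf' : pseg P (i + L - b - 1) (i + L - 1) <:+: T :=
        (pseg_prefix P (i + L - b - 1) (i + L - 1) j' hle').isInfix.trans hcontra
      have hmemS : (b + 1) ∈ S := by
        refine ⟨by omega, ?_⟩
        have he : Q.length - (b + 1) = i + L - b - 1 - 1 := by omega
        rw [he, hQ]
        exact hinf'
      have := hble _ hmemS
      omega
    · by_cases hj'P : j' = P.length
      · exact Or.inl hj'P
      · right
        intro hcontra
        have hjle := hj'J.1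
        have hmemJ : j' + 1 ∈ J := ⟨by omega, hcontra⟩
        have := le_csSup hJbdd hmemJ
        omega
end

section
/- In Case 2 of Algorithm 1 with (1-ε)L ≤ b < L: if P[i] starts a MEM, i ≤ m - L + 1, and b = LCS(P[1..i+L-1], T) satisfies (1-ε)L ≤ b < L for some 0 < ε < 1, then the MEM starting at position i + L - b has length at least b, hence length at least (1-ε)L. -/
open List

variable {α : Type*}

lemma pseg_mono_right (P : List α) (a j1 j2 : ℕ) (h : j1 ≤ j2) :
    pseg P a j1 <+: pseg P a j2 := by
  unfold pseg
  have : P.take j1 = (P.take j2).take j1 := by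
    rw [List.take_take, min_eq_left h]
  rw [this]
  exact (List.take_prefix _ _).drop _

/-- in Case 2 with `(1-ε)L ≤ b < L`, the MEM starting at `i + L - b` has
length at least `b`, hence at least `(1-ε)L`. -/
theorem case2_long_mem (P T : List α) (L i : ℕ) (ε : ℝ)
    (hL : 1 ≤ L) (hi1 : 1 ≤ i)
    (hε0 : 0 < ε) (hε1 : ε < 1)
    (hocc : ∀ c ∈ P, [c] <:+: T)
    (hstart : ∃ j, IsMEM P T i j)
    (hiL : i + L ≤ P.length + 1)
    (hblo : (1 - ε) * L ≤ (lcsLen (P.take (i + L - 1)) T : ℝ))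
    (hbhi : lcsLen (P.take (i + L - 1)) T < L) :
    ∃ j', IsMEM P T (i + L - lcsLen (P.take (i + L - 1)) T) j' ∧
      lcsLen (P.take (i + L - 1)) T ≤
        j' - (i + L - lcsLen (P.take (i + L - 1)) T) + 1 ∧
      (1 - ε) * L ≤ ((j' - (i + L - lcsLen (P.take (i + L - 1)) T) + 1 : ℕ) : ℝ) := by
  set Q : List α := P.take (i + L - 1) with hQ
  have hQlen : Q.length = i + L - 1 := by
    rw [hQ, List.length_take]; omega
  set b : ℕ := lcsLen Q T with hb
  set S : Set ℕ := {l | l ≤ Q.length ∧ Q.drop (Q.length - l) <:+: T} with hS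
  have hSbdd : BddAbove S := ⟨Q.length, fun l hl => hl.1⟩
  have hSne : S.Nonempty := ⟨0, by simp [hS], by simp [hS]⟩
  have hb_mem : b ∈ S := Nat.sSup_mem hSne hSbdd
  have hbQ : b ≤ Q.length := hb_mem.1
  -- b ≥ 1
  have hLpos : (0:ℝ) < (1 - ε) * L := by
    apply mul_pos (by linarith)
    exact_mod_cast Nat.lt_of_lt_of_le Nat.zero_lt_one hL
  have hb1 : 1 ≤ b := by
    by_contra h
    have hb0 : b = 0 := by omega
    rw [hb0] at hblo
    simp at hblo
    linarith
  -- key: the pseg identity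
  have hpseg : ∀ l, l ≤ i + L - 1 → pseg P (i + L - l) (i + L - 1) = Q.drop (Q.length - l) := by
    intro l hl
    rw [hQlen, hQ]
    unfold pseg
    congr 1
    omega
  have hboccur : pseg P (i + L - b) (i + L - 1) <:+: T := by
    rw [hpseg b (by omega)]
    exact hb_mem.2
  have hbsucc : ¬ (b + 1 ∈ S) := fun h => by
    have := le_csSup hSbdd h
    have : b + 1 ≤ b := this
    omega
  -- the maximal right end
  set J : Set ℕ := {j | i + L - 1 ≤ j ∧ j ≤ P.length ∧ pseg P (i + L - b) j <:+: T} with hJ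
  have hJbdd : BddAbove J := ⟨P.length, fun j hj => hj.2.1⟩
  have hJne : J.Nonempty := ⟨i + L - 1, le_refl _, by omega, hboccur⟩
  set j' : ℕ := sSup J with hj'
  have hj'mem : j' ∈ J := Nat.sSup_mem hJne hJbdd
  have hj'lb : i + L - 1 ≤ j' := hj'mem.1
  have hj'ub : j' ≤ P.length := hj'mem.2.1
  refine ⟨j', ⟨by omega, by omega, hj'ub, hj'mem.2.2, ?_, ?_⟩, by omega, ?_⟩
  · -- left maximality
    by_cases hs1 : i + L - b = 1
    · exact Or.inl hs1
    · refine Or.inr fun hcon => ?_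
      have hb1' : b + 1 ≤ i + L - 1 := by omega
      have hpre : pseg P (i + L - b - 1) (i + L - 1) <+: pseg P (i + L - b - 1) j' :=
        pseg_mono_right P _ _ _ hj'lb
      have hinf : pseg P (i + L - b - 1) (i + L - 1) <:+: T := hpre.isInfix.trans hcon
      have heq : i + L - b - 1 = i + L - (b + 1) := by omega
      rw [heq, hpseg (b + 1) hb1'] at hinf
      exact hbsucc ⟨by omega, hinf⟩
  · -- right maximality
    by_cases hjm : j' = P.length
    · exact Or.inl hjm
    · refine Or.inr fun hcon => ?_
      have : j' + 1 ∈ J := ⟨by omega, by omega, hcon⟩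
      have := le_csSup hJbdd this
      have : j' + 1 ≤ j' := this
      omega
  · calc (1 - ε) * L ≤ (b : ℝ) := hblo
      _ ≤ ((j' - (i + L - b) + 1 : ℕ) : ℝ) := by exact_mod_cast by omega
end

section
/- Full correctness of Algorithm 1: given strings P and T over Σ with every character of P occurring in T and a threshold L ≥ 1, Algorithm 1 reports exactly the set of MEMs of P with respect to T that have length at least L. -/
open List

variable {α : Type*}

/-- The set of MEM intervals reported by Algorithm 1, run with the given fuel from
position `i`. -/
noncomputable def algoReports (P T : List α) (L : ℕ) : ℕ → ℕ → Set (ℕ × ℕ)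
  | 0, _ => ∅
  | fuel + 1, i =>
    if i + L ≤ P.length + 1 then
      if L ≤ lcsLen (P.take (i + L - 1)) T then
        let f := lcpLen (P.drop (i - 1)) T
        insert (i, i + f - 1)
          (if i + f - 1 = P.length then (∅ : Set (ℕ × ℕ))
           else algoReports P T L fuel (i + f - lcsLen (P.take (i + f)) T + 1))
      else algoReports P T L fuel (i + L - lcsLen (P.take (i + L - 1)) T)
    else ∅

/-!
Let `f(i)` be the length of the longest prefix of `P[i..m]` occurring in `T`. A MEM is
determined by its start: `P[i..j]` is a MEM iff `j = i + f(i) - 1 ≥ i` and `i` is left-maximal,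
`i = 1 ∨ f(i - 1) ≤ f(i)`; left-maximality is the loop invariant. After examining `P[1..k]`
the algorithm resumes at the start `r = k - LCS(P[1..k], T) + 1` of the longest suffix of
`P[1..k]` occurring in `T`. This `r` is left-maximal (`P[r..k]` occurs, `P[r-1..k]` does not),
and no MEM reaching `k` starts before `r`. After reporting `P[i..i+f(i)-1]` (`k = i + f(i)`),
a MEM starting strictly between `i` and `r` ends before `k`, so it lies inside the reported
match and is not left-maximal. After a skip (`k = i + L - 1`), every MEM of length at least
`L` starting at or after `i` reaches `k`.
-/

theorem le_sSup_setOf_le_and_iff {n l : ℕ} {p : ℕ → Prop} (h0 : p 0)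
    (hp : ∀ ⦃k l⦄, k ≤ l → p l → p k) :
    l ≤ sSup {k | k ≤ n ∧ p k} ↔ l ≤ n ∧ p l := by
  have hbdd : BddAbove {k | k ≤ n ∧ p k} := ⟨n, fun _ hk => hk.1⟩
  have hmem := Nat.sSup_mem (s := {k | k ≤ n ∧ p k}) ⟨0, Nat.zero_le n, h0⟩ hbdd
  exact ⟨fun h => ⟨h.trans hmem.1, hp h hmem.2⟩, fun h => le_csSup hbdd h⟩

section MatchLengths

variable {P Q T : List α} {i j k l : ℕ}

theorem le_lcpLen_iff : l ≤ lcpLen Q T ↔ l ≤ Q.length ∧ Q.take l <:+: T :=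
  le_sSup_setOf_le_and_iff (by simp) fun _ _ hkl h =>
    (take_prefix_take_left hkl).isInfix.trans h

theorem le_lcsLen_iff : l ≤ lcsLen Q T ↔ l ≤ Q.length ∧ Q.drop (Q.length - l) <:+: T :=
  le_sSup_setOf_le_and_iff (by simp) fun _ _ hkl h =>
    (drop_suffix_drop_left Q (by omega)).isInfix.trans h

theorem lcpLen_drop_le : lcpLen (P.drop (i - 1)) T ≤ P.length - (i - 1) := by
  simpa using (le_lcpLen_iff.mp (le_refl (lcpLen (P.drop (i - 1)) T))).1

theorem lcsLen_take_le : lcsLen (P.take k) T ≤ k :=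
  (le_lcsLen_iff.mp le_rfl).1.trans (by simp)

theorem pseg_infix_pseg_s19 {a b : ℕ} (hia : i ≤ a) (hbj : b ≤ j) :
    pseg P a b <:+: pseg P i j := by
  have hdrop : a - 1 = (i - 1) + (a - 1 - (i - 1)) := by omega
  rw [pseg, pseg, ← min_eq_left hbj, ← take_take, drop_take, hdrop, ← drop_drop]
  exact (take_prefix _ _).isInfix.trans (drop_suffix _ _).isInfix

theorem pseg_infix_iff_lcpLen (hi : 1 ≤ i) (hij : i ≤ j + 1) (hj : j ≤ P.length) :
    pseg P i j <:+: T ↔ j + 1 ≤ i + lcpLen (P.drop (i - 1)) T := by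
  have hseg : pseg P i j = (P.drop (i - 1)).take (j + 1 - i) := by
    rw [pseg, drop_take]; congr 1; omega
  have hlen : j + 1 - i ≤ (P.drop (i - 1)).length := by rw [length_drop]; omega
  rw [hseg, ← Nat.sub_le_iff_le_add', le_lcpLen_iff]
  exact (and_iff_right hlen).symm

theorem pseg_infix_iff_lcsLen (hi : 1 ≤ i) (hik : i ≤ k + 1) (hk : k ≤ P.length) :
    pseg P i k <:+: T ↔ k + 1 ≤ i + lcsLen (P.take k) T := by
  have hlen : (P.take k).length = k := length_take_of_le hk
  have hseg : pseg P i k = (P.take k).drop ((P.take k).length - (k + 1 - i)) := by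
    rw [pseg, hlen]; congr 1; omega
  rw [hseg, ← Nat.sub_le_iff_le_add', le_lcsLen_iff, hlen]
  exact (and_iff_right (by omega)).symm

def LeftMaximalAt (P T : List α) (i : ℕ) : Prop :=
  i = 1 ∨ lcpLen (P.drop (i - 2)) T ≤ lcpLen (P.drop (i - 1)) T

theorem isMEM_iff (hi : 1 ≤ i) :
    IsMEM P T i j ↔
      i ≤ j ∧ j + 1 = i + lcpLen (P.drop (i - 1)) T ∧ LeftMaximalAt P T i := by
  have hfm : lcpLen (P.drop (i - 1)) T ≤ P.length - (i - 1) := lcpLen_drop_le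
  have hleft (hij : i ≤ j) (hend : j + 1 = i + lcpLen (P.drop (i - 1)) T) :
      (i = 1 ∨ ¬ pseg P (i - 1) j <:+: T) ↔ LeftMaximalAt P T i := by
    rcases eq_or_ne i 1 with rfl | hi1
    · simp [LeftMaximalAt]
    · rw [LeftMaximalAt, pseg_infix_iff_lcpLen (by omega) (by omega) (by omega),
        show i - 1 - 1 = i - 2 by omega]
      simp only [hi1, false_or]
      omega
  constructor
  · rintro ⟨-, hij, hjm, hocc, hl, hr⟩
    have hlong := (pseg_infix_iff_lcpLen hi (by omega) hjm).mp hocc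
    have hend : j + 1 = i + lcpLen (P.drop (i - 1)) T := by
      rcases Nat.lt_or_ge j P.length with hlt | hge
      · have := mt (pseg_infix_iff_lcpLen (T := T) hi (by omega) hlt).mpr
          (hr.resolve_left hlt.ne)
        omega
      · omega
    exact ⟨hij, hend, (hleft hij hend).mp hl⟩
  · rintro ⟨hij, hend, hl⟩
    have hjm : j ≤ P.length := by omega
    refine ⟨hi, hij, hjm, (pseg_infix_iff_lcpLen hi (by omega) hjm).mpr hend.le,
      (hleft hij hend).mpr hl, ?_⟩
    rcases Nat.lt_or_ge j P.length with hlt | hge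
    · exact Or.inr fun h => by
        have := (pseg_infix_iff_lcpLen hi (by omega) hlt).mp h
        omega
    · exact Or.inl (by omega)

theorem not_isMEM_of_lt_of_infix {a b : ℕ} (hi : 1 ≤ i) (hocc : pseg P i j <:+: T) (hia : i < a)
    (hbj : b ≤ j) : ¬ IsMEM P T a b := by
  rintro ⟨-, -, -, -, ha | ha, -⟩
  · omega
  · exact ha ((pseg_infix_pseg_s19 (by omega) hbj).trans hocc)

noncomputable def restartPos (P T : List α) (k : ℕ) : ℕ := k - lcsLen (P.take k) T + 1

theorem leftMaximalAt_restartPos (hk : k ≤ P.length) : LeftMaximalAt P T (restartPos P T k) := by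
  obtain ⟨r, hr⟩ : ∃ r, restartPos P T k = r := ⟨_, rfl⟩
  have hc : lcsLen (P.take k) T ≤ k := lcsLen_take_le
  rw [hr]
  unfold restartPos at hr
  rcases Nat.lt_or_ge r 2 with hr1 | hr2
  · exact Or.inl (by omega)
  · have hocc : k + 1 ≤ r + lcpLen (P.drop (r - 1)) T :=
      (pseg_infix_iff_lcpLen (by omega) (by omega) hk).mp
        ((pseg_infix_iff_lcsLen (by omega) (by omega) hk).mpr (by omega))
    have hnot_occ : ¬ k + 1 ≤ r - 1 + lcpLen (P.drop (r - 1 - 1)) T := fun h => by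
      have := (pseg_infix_iff_lcsLen (i := r - 1) (by omega) (by omega) hk).mp
        ((pseg_infix_iff_lcpLen (by omega) (by omega) hk).mpr h)
      omega
    rw [show r - 1 - 1 = r - 2 by omega] at hnot_occ
    exact Or.inr (by omega)

theorem restartPos_le_of_isMEM {a b : ℕ} (h : IsMEM P T a b) (hkb : k ≤ b) :
    restartPos P T k ≤ a := by
  obtain ⟨ha, hab, hbm, hocc, -, -⟩ := h
  unfold restartPos
  rcases Nat.lt_or_ge k a with hka | hak
  · omega
  · have := (pseg_infix_iff_lcsLen ha (by omega) (by omega)).mp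
      ((pseg_infix_pseg_s19 le_rfl hkb).trans hocc)
    omega

theorem le_lcsLen_take_iff_le_lcpLen_drop (hi : 1 ≤ i) (hk : i + l - 1 ≤ P.length) :
    l ≤ lcsLen (P.take (i + l - 1)) T ↔ l ≤ lcpLen (P.drop (i - 1)) T := by
  have hlcs := pseg_infix_iff_lcsLen (T := T) hi (show i ≤ i + l - 1 + 1 by omega) hk
  have hlcp := pseg_infix_iff_lcpLen (T := T) hi (show i ≤ i + l - 1 + 1 by omega) hk
  have hocc := hlcs.symm.trans hlcp
  constructor
  · exact fun h => by have := hocc.mp (by omega); omega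
  · exact fun h => by have := hocc.mpr (by omega); omega

theorem lt_restartPos_add_lcpLen (hi : 1 ≤ i) (hk : i + lcpLen (P.drop (i - 1)) T ≤ P.length) :
    i < restartPos P T (i + lcpLen (P.drop (i - 1)) T) := by
  have hnext : ¬ pseg P i (i + lcpLen (P.drop (i - 1)) T) <:+: T := fun h => by
    have := (pseg_infix_iff_lcpLen hi (by omega) hk).mp h
    omega
  have := mt (pseg_infix_iff_lcsLen hi (by omega) hk).mpr hnext
  unfold restartPos
  omega

end MatchLengths

section Algorithm

variable {P T : List α} {L i : ℕ}

def longMEMsFrom (P T : List α) (L i : ℕ) : Set (ℕ × ℕ) :=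
  {p | IsMEM P T p.1 p.2 ∧ L ≤ p.2 - p.1 + 1 ∧ i ≤ p.1}

@[simp]
theorem mem_longMEMsFrom {a b : ℕ} :
    (a, b) ∈ longMEMsFrom P T L i ↔ IsMEM P T a b ∧ L ≤ b - a + 1 ∧ i ≤ a :=
  Iff.rfl

theorem longMEMsFrom_eq_empty (h : P.length + 1 < i + L) : longMEMsFrom P T L i = ∅ :=
  Set.eq_empty_iff_forall_notMem.mpr fun _ ⟨hmem, hlen, hia⟩ => by
    have := hmem.2.1
    have := hmem.2.2.1
    omega

theorem longMEMsFrom_skip (hshort : lcsLen (P.take (i + L - 1)) T < L) :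
    longMEMsFrom P T L i = longMEMsFrom P T L (restartPos P T (i + L - 1)) := by
  ext ⟨a, b⟩
  simp only [mem_longMEMsFrom]
  constructor
  · rintro ⟨hmem, hlen, hia⟩
    exact ⟨hmem, hlen, restartPos_le_of_isMEM hmem (by have := hmem.2.1; omega)⟩
  · rintro ⟨hmem, hlen, hra⟩
    exact ⟨hmem, hlen, by unfold restartPos at hra; omega⟩

theorem mem_longMEMsFrom_iff_of_report {a b : ℕ} (hL : 1 ≤ L) (hi : 1 ≤ i)
    (hmax : LeftMaximalAt P T i) (hLf : L ≤ lcpLen (P.drop (i - 1)) T) :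
    (a, b) ∈ longMEMsFrom P T L i ↔ (a, b) = (i, i + lcpLen (P.drop (i - 1)) T - 1) ∨
      (IsMEM P T a b ∧ L ≤ b - a + 1 ∧ i < a) := by
  rw [mem_longMEMsFrom]
  constructor
  · rintro ⟨hmem, hlen, hia⟩
    rcases eq_or_lt_of_le hia with rfl | hia
    · obtain ⟨-, hend, -⟩ := (isMEM_iff hi).mp hmem
      exact Or.inl (by rw [Prod.mk.injEq]; omega)
    · exact Or.inr ⟨hmem, hlen, hia⟩
  · rintro (h | ⟨hmem, hlen, hia⟩)
    · obtain ⟨rfl, rfl⟩ := Prod.mk.inj h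
      exact ⟨(isMEM_iff hi).mpr ⟨by omega, by omega, hmax⟩, by omega, le_rfl⟩
    · exact ⟨hmem, hlen, hia.le⟩

theorem longMEMsFrom_eq_singleton (hL : 1 ≤ L) (hi : 1 ≤ i) (hmax : LeftMaximalAt P T i)
    (hLf : L ≤ lcpLen (P.drop (i - 1)) T) (hend : i + lcpLen (P.drop (i - 1)) T - 1 = P.length) :
    longMEMsFrom P T L i = {(i, i + lcpLen (P.drop (i - 1)) T - 1)} := by
  have hmatch : pseg P i (i + lcpLen (P.drop (i - 1)) T - 1) <:+: T :=
    (pseg_infix_iff_lcpLen hi (by omega) (by omega)).mpr (by omega)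
  ext ⟨a, b⟩
  rw [mem_longMEMsFrom_iff_of_report hL hi hmax hLf, Set.mem_singleton_iff, or_iff_left]
  rintro ⟨hmem, -, hia⟩
  exact not_isMEM_of_lt_of_infix hi hmatch hia (hend ▸ hmem.2.2.1) hmem

theorem longMEMsFrom_eq_insert (hL : 1 ≤ L) (hi : 1 ≤ i) (hmax : LeftMaximalAt P T i)
    (hLf : L ≤ lcpLen (P.drop (i - 1)) T) (hk : i + lcpLen (P.drop (i - 1)) T ≤ P.length) :
    longMEMsFrom P T L i = insert (i, i + lcpLen (P.drop (i - 1)) T - 1)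
      (longMEMsFrom P T L (restartPos P T (i + lcpLen (P.drop (i - 1)) T))) := by
  have hmatch : pseg P i (i + lcpLen (P.drop (i - 1)) T - 1) <:+: T :=
    (pseg_infix_iff_lcpLen hi (by omega) (by omega)).mpr (by omega)
  ext ⟨a, b⟩
  rw [mem_longMEMsFrom_iff_of_report hL hi hmax hLf, Set.mem_insert_iff, mem_longMEMsFrom]
  refine or_congr_right ⟨fun ⟨hmem, hlen, hia⟩ => ⟨hmem, hlen, ?_⟩,
    fun ⟨hmem, hlen, hra⟩ => ⟨hmem, hlen, (lt_restartPos_add_lcpLen hi hk).trans_le hra⟩⟩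
  rcases lt_or_ge b (i + lcpLen (P.drop (i - 1)) T) with hb | hb
  · exact absurd hmem (not_isMEM_of_lt_of_infix hi hmatch hia (by omega))
  · exact restartPos_le_of_isMEM hmem hb

theorem algoReports_eq_longMEMsFrom (hL : 1 ≤ L) (fuel : ℕ) (hi : 1 ≤ i)
    (hfuel : P.length + 2 ≤ fuel + i) (hmax : LeftMaximalAt P T i) :
    algoReports P T L fuel i = longMEMsFrom P T L i := by
  induction fuel generalizing i with
  | zero => exact (longMEMsFrom_eq_empty (by omega)).symm
  | succ n ih =>
    rw [algoReports]
    by_cases hcond : i + L ≤ P.length + 1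
    swap
    · rw [if_neg hcond, longMEMsFrom_eq_empty (by omega)]
    have hk : lcsLen (P.take (i + L - 1)) T ≤ i + L - 1 := lcsLen_take_le
    rw [if_pos hcond]
    by_cases hlong : L ≤ lcsLen (P.take (i + L - 1)) T
    · have hLf : L ≤ lcpLen (P.drop (i - 1)) T :=
        (le_lcsLen_take_iff_le_lcpLen_drop hi (by omega)).mp hlong
      have hfm : lcpLen (P.drop (i - 1)) T ≤ P.length - (i - 1) := lcpLen_drop_le
      rw [if_pos hlong]
      dsimp only
      split_ifs with hend
      · rw [longMEMsFrom_eq_singleton hL hi hmax hLf hend, insert_empty_eq]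
      · have hk' : i + lcpLen (P.drop (i - 1)) T ≤ P.length := by omega
        have := lt_restartPos_add_lcpLen hi hk'
        rw [longMEMsFrom_eq_insert hL hi hmax hLf hk',
          ← ih (i := restartPos P T (i + lcpLen (P.drop (i - 1)) T)) (by omega) (by omega)
            (leftMaximalAt_restartPos hk')]
        rfl
    · have hrestart : i + L - lcsLen (P.take (i + L - 1)) T = restartPos P T (i + L - 1) := by
        unfold restartPos
        omega
      rw [if_neg hlong, hrestart, ih (i := restartPos P T (i + L - 1)) (by omega) (by omega)
        (leftMaximalAt_restartPos (by omega))]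
      exact (longMEMsFrom_skip (by omega)).symm

end Algorithm

theorem algorithm_correct_general (P T : List α) (L : ℕ)
    (hL : 1 ≤ L) :
    ∀ i j, (i, j) ∈ algoReports P T L (P.length + 1) 1 ↔
      (IsMEM P T i j ∧ L ≤ j - i + 1) := by
  intro i j
  rw [algoReports_eq_longMEMsFrom hL _ le_rfl (by omega) (Or.inl rfl), mem_longMEMsFrom]
  exact ⟨fun h => ⟨h.1, h.2.1⟩, fun h => ⟨h.1, h.2, h.1.1⟩⟩

/-- full correctness of Algorithm 1: it reports exactly the MEMs of `P`
with respect to `T` of length at least `L`. -/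
theorem algorithm_correct (P T : List α) (L : ℕ)
    (hL : 1 ≤ L)
    (hocc : ∀ c ∈ P, [c] <:+: T) :
    ∀ i j, (i, j) ∈ algoReports P T L (P.length + 1) 1 ↔
      (IsMEM P T i j ∧ L ≤ j - i + 1) :=
  algorithm_correct_general P T L hL
end
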